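/- arXiv:2009.00839 — 2 statements merged into one kernel-verified Lean document; each statement's English description precedes it below -/
import Mathlib

section
/- Let A and B be N×N real symmetric matrices with eigenvalues λ₁^A ≤ λ₂^A ≤ ... ≤ λ_N^A and λ₁^B ≤ λ₂^B ≤ ... ≤ λ_N^B respectively (listed with multiplicity in increasing order). Then ∑_{j=1}^N |λ_j^A − λ_j^B|² ≤ tr((A−B)²). -/
/-!
Diagonalize `A = P D_α P*` and `B = Q D_β Q*` and put `W = P* Q`, a unitary matrix. Then
`A - B = P (D_α W - W D_β) Q*`, so `tr((A - B)²) = ∑ᵢⱼ |Wᵢⱼ|² (αᵢ - βⱼ)²`, and `(|Wᵢⱼ|²)` is doubly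
stochastic. This expression is linear in the doubly stochastic matrix, so by Birkhoff's theorem it
is bounded below by its value `∑ᵢ (αᵢ - β_{σ i})²` at some permutation matrix, and by the
rearrangement inequality that is at least the sum for the sorted eigenvalues.
-/

open Finset Matrix

section Rearrangement

variable {ι : Type*} [Fintype ι]

lemma Equiv.Perm.sum_permMatrix_mul [DecidableEq ι] {R : Type*} [NonAssocSemiring R]
    (σ : Equiv.Perm ι) (c : ι → ι → R) : ∑ i, ∑ j, σ.permMatrix R i j * c i j = ∑ i, c i (σ i) := by
  simp [Equiv.Perm.permMatrix, PEquiv.toMatrix_apply, ite_mul]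

variable {a b : ι → ℝ}

lemma Monovary.sum_sub_sq_le_sum_sub_comp_perm_sq (h : Monovary a b) (σ : Equiv.Perm ι) :
    ∑ i, (a i - b i) ^ 2 ≤ ∑ i, (a i - b (σ i)) ^ 2 := by
  have hb : ∑ i, b (σ i) ^ 2 = ∑ i, b i ^ 2 := Equiv.sum_comp σ (b · ^ 2)
  have hab : ∑ i, a i * b (σ i) ≤ ∑ i, a i * b i := h.sum_mul_comp_perm_le_sum_mul
  simp only [sub_sq, sum_add_distrib, sum_sub_distrib, mul_assoc, ← mul_sum]
  linarith

lemma Monovary.sum_sub_sq_le_sum_mul_sub_sq_of_mem_doublyStochastic [DecidableEq ι]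
    (h : Monovary a b) {S : Matrix ι ι ℝ} (hS : S ∈ doublyStochastic ℝ ι) :
    ∑ i, (a i - b i) ^ 2 ≤ ∑ i, ∑ j, S i j * (a i - b j) ^ 2 := by
  let f : Matrix ι ι ℝ →ₗ[ℝ] ℝ := ∑ i, ∑ j, (a i - b j) ^ 2 • entryLinearMap ℝ ℝ i j
  have hf (M : Matrix ι ι ℝ) : f M = ∑ i, ∑ j, M i j * (a i - b j) ^ 2 := by
    simp [f, LinearMap.sum_apply, mul_comm]
  rw [← SetLike.mem_coe, doublyStochastic_eq_convexHull_permMatrix] at hS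
  obtain ⟨_, ⟨σ, rfl⟩, hσ⟩ :=
    (f.concaveOn convex_univ).exists_le_of_mem_convexHull (Set.subset_univ _) hS
  calc ∑ i, (a i - b i) ^ 2 ≤ ∑ i, (a i - b (σ i)) ^ 2 := h.sum_sub_sq_le_sum_sub_comp_perm_sq σ
    _ = f (σ.permMatrix ℝ) := by rw [hf, σ.sum_permMatrix_mul]
    _ ≤ f S := hσ
    _ = _ := hf S

end Rearrangement

namespace Matrix

variable {n 𝕜 : Type*} [Fintype n] [RCLike 𝕜]

lemma of_norm_sq_mem_doublyStochastic [DecidableEq n] {U : Matrix n n 𝕜}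
    (hU : U ∈ unitaryGroup n 𝕜) :
    of (fun i j ↦ ‖U i j‖ ^ 2) ∈ doublyStochastic ℝ n := by
  have hrow (i : n) : ∑ j, ‖U i j‖ ^ 2 = 1 := by
    have := congr_fun₂ (mem_unitaryGroup_iff.1 hU) i i
    simp only [mul_apply, star_apply, RCLike.star_def, RCLike.mul_conj, one_apply_eq] at this
    exact_mod_cast this
  have hcol (j : n) : ∑ i, ‖U i j‖ ^ 2 = 1 := by
    have := congr_fun₂ (mem_unitaryGroup_iff'.1 hU) j j
    simp only [mul_apply, star_apply, RCLike.star_def, mul_comm (starRingEnd 𝕜 _),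
      RCLike.mul_conj, one_apply_eq] at this
    exact_mod_cast this
  exact mem_doublyStochastic_iff_sum.2 ⟨fun _ _ ↦ by simp only [of_apply]; positivity, hrow, hcol⟩

lemma trace_mul_conjTranspose_self (X : Matrix n n 𝕜) :
    trace (X * Xᴴ) = ((∑ i, ∑ j, ‖X i j‖ ^ 2 : ℝ) : 𝕜) := by
  simp [trace, mul_apply, RCLike.mul_conj]

lemma trace_mul_conjTranspose_self_of_mem_unitaryGroup [DecidableEq n] {U V : Matrix n n 𝕜}
    (hU : U ∈ unitaryGroup n 𝕜) (hV : V ∈ unitaryGroup n 𝕜) (X : Matrix n n 𝕜) :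
    trace (U * X * V * (U * X * V)ᴴ) = trace (X * Xᴴ) := by
  have hV' : V * Vᴴ = 1 := mem_unitaryGroup_iff.1 hV
  have hU' : Uᴴ * U = 1 := mem_unitaryGroup_iff'.1 hU
  calc trace (U * X * V * (U * X * V)ᴴ) = trace (U * (X * (V * Vᴴ) * Xᴴ) * Uᴴ) := by
        simp only [conjTranspose_mul, Matrix.mul_assoc]
    _ = trace (X * Xᴴ) := by rw [hV', Matrix.mul_one, trace_mul_cycle, hU', Matrix.one_mul]

end Matrix

namespace Matrix.IsHermitian

variable {n 𝕜 : Type*} [Fintype n] [DecidableEq n] [RCLike 𝕜] {A B : Matrix n n 𝕜}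

/-- `W = P* Q`, whose entry `(i, j)` is `⟪uᵢ, vⱼ⟫` for the eigenvectors `uᵢ` of `A`, `vⱼ` of `B`. -/
noncomputable def eigenbasisTransition (hA : A.IsHermitian) (hB : B.IsHermitian) :
    Matrix n n 𝕜 :=
  star (hA.eigenvectorUnitary : Matrix n n 𝕜) * hB.eigenvectorUnitary

lemma eigenbasisTransition_mem_unitaryGroup (hA : A.IsHermitian) (hB : B.IsHermitian) :
    eigenbasisTransition hA hB ∈ unitaryGroup n 𝕜 :=
  mul_mem (Unitary.star_mem (SetLike.coe_mem _)) (SetLike.coe_mem _)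

lemma sub_eq_eigenvectorUnitary_mul_mul_star (hA : A.IsHermitian) (hB : B.IsHermitian) :
    A - B = (hA.eigenvectorUnitary : Matrix n n 𝕜) *
      (diagonal (RCLike.ofReal ∘ hA.eigenvalues) * eigenbasisTransition hA hB -
        eigenbasisTransition hA hB * diagonal (RCLike.ofReal ∘ hB.eigenvalues)) *
      star (hB.eigenvectorUnitary : Matrix n n 𝕜) := by
  have hP := mem_unitaryGroup_iff.1 hA.eigenvectorUnitary.2
  have hQ := mem_unitaryGroup_iff.1 hB.eigenvectorUnitary.2
  conv_lhs => rw [hA.spectral_theorem, hB.spectral_theorem]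
  simp only [Unitary.conjStarAlgAut_apply, eigenbasisTransition, Matrix.mul_sub, Matrix.sub_mul,
    Matrix.mul_assoc, hQ, Matrix.mul_one]
  simp only [← Matrix.mul_assoc, hP, Matrix.one_mul]

lemma trace_sub_mul_sub (hA : A.IsHermitian) (hB : B.IsHermitian) :
    trace ((A - B) * (A - B)) = ((∑ i, ∑ j, ‖eigenbasisTransition hA hB i j‖ ^ 2 *
      (hA.eigenvalues i - hB.eigenvalues j) ^ 2 : ℝ) : 𝕜) := by
  nth_rewrite 2 [← (hA.sub hB).eq]
  rw [sub_eq_eigenvectorUnitary_mul_mul_star hA hB,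
    trace_mul_conjTranspose_self_of_mem_unitaryGroup (SetLike.coe_mem _)
      (Unitary.star_mem (SetLike.coe_mem _)),
    trace_mul_conjTranspose_self]
  congr! 6 with i _ j _
  rw [sub_apply, diagonal_mul, mul_diagonal, Function.comp_apply, Function.comp_apply,
    mul_comm (RCLike.ofReal _), ← mul_sub, ← RCLike.ofReal_sub, norm_mul, RCLike.norm_ofReal,
    mul_pow, sq_abs]

end Matrix.IsHermitian

/-- Hoffman–Wielandt inequality for real symmetric matrices. -/
theorem hoffman_wielandt {N : ℕ} (A B : Matrix (Fin N) (Fin N) ℝ)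
    (hA : A.IsHermitian) (hB : B.IsHermitian)
    (lA lB : Fin N → ℝ) (hmA : Monotone lA) (hmB : Monotone lB)
    (σA σB : Equiv.Perm (Fin N))
    (hlA : lA = hA.eigenvalues ∘ σA) (hlB : lB = hB.eigenvalues ∘ σB) :
    ∑ j, |lA j - lB j| ^ 2 ≤ Matrix.trace ((A - B) * (A - B)) := by
  set W := hA.eigenbasisTransition hB
  have hS : (of fun i j ↦ ‖W i j‖ ^ 2).submatrix σA σB ∈ doublyStochastic ℝ (Fin N) :=
    reindex_mem_doublyStochastic (e₁ := σA.symm) (e₂ := σB.symm)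
      (of_norm_sq_mem_doublyStochastic (hA.eigenbasisTransition_mem_unitaryGroup hB))
  calc ∑ j, |lA j - lB j| ^ 2 = ∑ j, (lA j - lB j) ^ 2 := by simp only [sq_abs]
    _ ≤ ∑ i, ∑ j, ‖W (σA i) (σB j)‖ ^ 2 * (lA i - lB j) ^ 2 :=
        (hmA.monovary hmB).sum_sub_sq_le_sum_mul_sub_sq_of_mem_doublyStochastic hS
    _ = ∑ i, ∑ j, ‖W i j‖ ^ 2 * (hA.eigenvalues i - hB.eigenvalues j) ^ 2 := by
        subst hlA hlB
        exact Fintype.sum_equiv σA _ _ fun _ ↦ Fintype.sum_equiv σB _ _ fun _ ↦ rfl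
    _ = trace ((A - B) * (A - B)) := by rw [hA.trace_sub_mul_sub hB, RCLike.ofReal_real_eq_id, id]
end

section
/- Let (ω_n)_{n ∈ ℤ^d} be i.i.d. random variables whose common distribution μ has density (δ/2)|x|^{-(1+δ)} for |x| > 1 and 0 for |x| < 1, with δ > 0. Fix α with 0 < αδ < d, set Γ_L = (2L+1)^{(d−αδ)/δ}, and let Ẽ_L^max(ω) = max_{n ∈ Λ_L} ω_n/(1+|n|)^α. Then for every x > 0, P(Ẽ_L^max/Γ_L ≤ x) → exp(−b/(2x^δ)) as L → ∞, and for every x ≤ 0 the limit is 0, where b = lim_{L→∞} Γ_L^{-δ} ∑_{n ∈ Λ_L} (1+|n|)^{-αδ}. -/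
/-!
The event `{max_n ω_n / (1 + |n|)^α ≤ x Γ_L}` is the intersection of the independent events
`{ω_n ≤ x Γ_L (1 + |n|)^α}`, so its probability is a product of distribution-function values.
For `x > 0` every threshold tends to infinity uniformly in `n`, each factor is `1 - q_n` with the
Pareto tail `q_n = (x Γ_L (1 + |n|)^α)^{-δ} / 2`, and since the `q_n` are uniformly small,
`∏ (1 - q_n)` is squeezed between `exp (-∑ q_n / (1 - max q_n))` and `exp (-∑ q_n)`; the normalisation
`Γ_L` makes `∑ q_n → b / (2 x^δ)`. For `x ≤ 0` every factor is at most `P(ω_0 ≤ 1) = 1/2`, while the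
number of factors grows without bound.
-/

open MeasureTheory ProbabilityTheory Filter

/-- The cube Λ_L = {n ∈ ℤ^d : |n_i| ≤ L for all i}. -/
noncomputable def cube (d L : ℕ) : Finset (Fin d → ℤ) :=
  Finset.Icc (fun _ => -(L : ℤ)) (fun _ => (L : ℤ))

open Set Topology

theorem Real.exp_neg_div_one_sub_le_one_sub {q : ℝ} (hq : q < 1) :
    Real.exp (-(q / (1 - q))) ≤ 1 - q := by
  have h1q : 0 < 1 - q := by linarith
  have := Real.add_one_le_exp (q / (1 - q))
  rw [Real.exp_neg, inv_le_comm₀ (Real.exp_pos _) h1q]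
  calc (1 - q)⁻¹ = q / (1 - q) + 1 := by field_simp; ring
    _ ≤ _ := this

theorem tendsto_prod_one_sub_of_tendsto_sum {β ι : Type*} {l : Filter β} {s : β → Finset ι}
    {q : β → ι → ℝ} {ε : β → ℝ} {c : ℝ} (hε : Tendsto ε l (𝓝 0))
    (hq : ∀ᶠ L in l, ∀ i ∈ s L, 0 ≤ q L i ∧ q L i ≤ ε L)
    (hsum : Tendsto (fun L => ∑ i ∈ s L, q L i) l (𝓝 c)) :
    Tendsto (fun L => ∏ i ∈ s L, (1 - q L i)) l (𝓝 (Real.exp (-c))) := by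
  have hlower : Tendsto (fun L => Real.exp (-(∑ i ∈ s L, q L i) / (1 - ε L))) l
      (𝓝 (Real.exp (-c))) := by
    simpa using (hsum.neg.div (hε.const_sub 1) (by norm_num)).rexp
  have hupper : Tendsto (fun L => Real.exp (-(∑ i ∈ s L, q L i))) l (𝓝 (Real.exp (-c))) :=
    hsum.neg.rexp
  refine tendsto_of_tendsto_of_tendsto_of_le_of_le' hlower hupper ?_ ?_
  · filter_upwards [hq, hε.eventually (gt_mem_nhds one_pos)] with L hqL hεL
    rw [neg_div, Finset.sum_div, ← Finset.sum_neg_distrib, Real.exp_sum]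
    refine Finset.prod_le_prod (fun _ _ => (Real.exp_pos _).le) fun i hi => ?_
    obtain ⟨hq0, hqε⟩ := hqL i hi
    calc Real.exp (-(q L i / (1 - ε L))) ≤ Real.exp (-(q L i / (1 - q L i))) := by
          gcongr
      _ ≤ 1 - q L i := Real.exp_neg_div_one_sub_le_one_sub (by linarith)
  · filter_upwards [hq, hε.eventually (gt_mem_nhds one_pos)] with L hqL hεL
    rw [← Finset.sum_neg_distrib, Real.exp_sum]
    refine Finset.prod_le_prod (fun i hi => ?_) fun i _ => Real.one_sub_le_exp_neg _
    linarith [hqL i hi, hεL]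

theorem tendsto_prod_nhds_zero_of_le_of_lt_one {β ι : Type*} {l : Filter β}
    {s : β → Finset ι} {f : β → ι → ℝ} {r : ℝ} (hr₀ : 0 ≤ r) (hr : r < 1)
    (hf : ∀ L, ∀ i ∈ s L, 0 ≤ f L i ∧ f L i ≤ r)
    (hcard : Tendsto (fun L => (s L).card) l atTop) :
    Tendsto (fun L => ∏ i ∈ s L, f L i) l (𝓝 0) := by
  refine squeeze_zero (fun L => Finset.prod_nonneg fun i hi => (hf L i hi).1) (fun L => ?_)
    ((tendsto_pow_atTop_nhds_zero_of_lt_one hr₀ hr).comp hcard)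
  calc ∏ i ∈ s L, f L i ≤ ∏ _i ∈ s L, r :=
        Finset.prod_le_prod (fun i hi => (hf L i hi).1) fun i hi => (hf L i hi).2
    _ = r ^ (s L).card := Finset.prod_const r

theorem ProbabilityTheory.iIndepFun.measure_sup'_div_le_eq_prod {ι Ω : Type*}
    [MeasurableSpace Ω] {P : Measure Ω} {X : ι → Ω → ℝ} (hind : iIndepFun X P)
    (hX : ∀ i, Measurable (X i)) {ν : Measure ℝ} (hν : ∀ i, P.map (X i) = ν)
    {s : Finset ι} (hs : s.Nonempty) {w : ι → ℝ} (hw : ∀ i ∈ s, 0 < w i) (y : ℝ) :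
    P {ω | s.sup' hs (fun i => X i ω / w i) ≤ y} = ∏ i ∈ s, ν (Iic (y * w i)) := by
  have hevent : {ω | s.sup' hs (fun i => X i ω / w i) ≤ y} = ⋂ i ∈ s, X i ⁻¹' Iic (y * w i) := by
    ext ω
    simp only [mem_ofPred_eq, Finset.sup'_le_iff, mem_iInter, mem_preimage, mem_Iic]
    exact forall₂_congr fun i hi => div_le_iff₀ (hw i hi)
  rw [hevent, hind.measure_inter_preimage_eq_mul s fun _ _ => measurableSet_Iic]
  exact Finset.prod_congr rfl fun i _ => by
    rw [← Measure.map_apply (hX i) measurableSet_Iic, hν i]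

noncomputable def symmParetoMeasure (δ : ℝ) : Measure ℝ :=
  volume.withDensity
    (fun t => ENNReal.ofReal (if 1 < |t| then δ / 2 * |t| ^ (-(1 + δ)) else 0))

namespace symmParetoMeasure

variable {δ : ℝ}

theorem measure_Ioi (hδ : 0 < δ) {t : ℝ} (ht : 1 ≤ t) :
    symmParetoMeasure δ (Ioi t) = ENNReal.ofReal (t ^ (-δ) / 2) := by
  have ht0 : 0 < t := one_pos.trans_le ht
  have hdensity : EqOn
      (fun s => ENNReal.ofReal (if 1 < |s| then δ / 2 * |s| ^ (-(1 + δ)) else 0))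
      (fun s => ENNReal.ofReal (δ / 2 * s ^ (-(1 + δ)))) (Ioi t) := by
    intro s hs
    have h1s : 1 < s := ht.trans_lt hs
    simp only [abs_of_pos (one_pos.trans h1s), if_pos h1s]
  have hint : IntegrableOn (fun s : ℝ => δ / 2 * s ^ (-(1 + δ))) (Ioi t) :=
    (integrableOn_Ioi_rpow_of_lt (by linarith) ht0).const_mul _
  have hnonneg : 0 ≤ᵐ[volume.restrict (Ioi t)] fun s : ℝ => δ / 2 * s ^ (-(1 + δ)) :=
    (ae_restrict_iff' measurableSet_Ioi).2 <| .of_forall fun s hs =>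
      have : 0 < s := ht0.trans hs
      by positivity
  rw [symmParetoMeasure, withDensity_apply _ measurableSet_Ioi,
    setLIntegral_congr_fun measurableSet_Ioi hdensity,
    ← ofReal_integral_eq_lintegral_ofReal hint hnonneg, integral_const_mul,
    integral_Ioi_rpow_of_lt (by linarith) ht0, show -(1 + δ) + 1 = -δ by ring]
  congr 1
  field_simp

variable [IsProbabilityMeasure (symmParetoMeasure δ)]

theorem measureReal_Iic_of_one_le (hδ : 0 < δ) {t : ℝ} (ht : 1 ≤ t) :
    (symmParetoMeasure δ).real (Iic t) = 1 - t ^ (-δ) / 2 := by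
  rw [← compl_Ioi, probReal_compl_eq_one_sub measurableSet_Ioi, measureReal_def,
    measure_Ioi hδ ht, ENNReal.toReal_ofReal (by positivity)]

theorem measureReal_Iic_le_half (hδ : 0 < δ) {t : ℝ} (ht : t ≤ 1) :
    (symmParetoMeasure δ).real (Iic t) ≤ 1 / 2 := by
  have hsub : Iic t ⊆ (Ioi 1)ᶜ := fun s hs => not_lt.2 (le_trans hs ht)
  have hIoi : (symmParetoMeasure δ).real (Ioi 1) = 1 / 2 := by
    rw [measureReal_def, measure_Ioi hδ le_rfl, Real.one_rpow, ENNReal.toReal_ofReal (by norm_num)]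
  calc (symmParetoMeasure δ).real (Iic t) ≤ (symmParetoMeasure δ).real (Ioi 1)ᶜ :=
        measureReal_mono hsub
    _ = 1 / 2 := by rw [probReal_compl_eq_one_sub measurableSet_Ioi, hIoi]; norm_num

theorem tendsto_prod_measureReal_Iic (hδ : 0 < δ) {β ι : Type*} {l : Filter β}
    {s : β → Finset ι} {t : β → ι → ℝ} {m : β → ℝ} {c : ℝ} (hm : Tendsto m l atTop)
    (htm : ∀ᶠ L in l, ∀ i ∈ s L, m L ≤ t L i)
    (hsum : Tendsto (fun L => ∑ i ∈ s L, t L i ^ (-δ) / 2) l (𝓝 c)) :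
    Tendsto (fun L => ∏ i ∈ s L, (symmParetoMeasure δ).real (Iic (t L i))) l
      (𝓝 (Real.exp (-c))) := by
  have hm_one : ∀ᶠ L in l, 1 ≤ m L := hm.eventually_ge_atTop 1
  have hε : Tendsto (fun L => m L ^ (-δ) / 2) l (𝓝 0) := by
    simpa using ((tendsto_rpow_neg_atTop hδ).comp hm).div_const 2
  have hq : ∀ᶠ L in l, ∀ i ∈ s L, 0 ≤ t L i ^ (-δ) / 2 ∧ t L i ^ (-δ) / 2 ≤ m L ^ (-δ) / 2 := by
    filter_upwards [htm, hm_one] with L htmL hmL i hi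
    have hm0 : 0 < m L := one_pos.trans_le hmL
    have ht0 : 0 < t L i := hm0.trans_le (htmL i hi)
    have := Real.rpow_le_rpow_of_nonpos hm0 (htmL i hi) (neg_nonpos.2 hδ.le)
    exact ⟨by positivity, by linarith⟩
  refine (tendsto_prod_one_sub_of_tendsto_sum hε hq hsum).congr' ?_
  filter_upwards [htm, hm_one] with L htmL hmL
  exact Finset.prod_congr rfl fun i hi =>
    (measureReal_Iic_of_one_le hδ (hmL.trans (htmL i hi))).symm

end symmParetoMeasure

theorem tendsto_card_cube {d : ℕ} (hd : 1 ≤ d) :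
    Tendsto (fun L => (cube d L).card) atTop atTop := by
  refine tendsto_atTop_mono (fun L => ?_) tendsto_id
  rw [cube, Pi.card_Icc]
  simp only [Int.card_Icc, Finset.prod_const, Finset.card_univ, Fintype.card_fin]
  calc L ≤ 2 * L + 1 := by omega
    _ = (2 * L + 1) ^ 1 := (pow_one _).symm
    _ ≤ (2 * L + 1) ^ d := Nat.pow_le_pow_right (by omega) hd
    _ = _ := by congr 1; omega

theorem tendsto_two_mul_add_one_rpow_atTop {e : ℝ} (he : 0 < e) :
    Tendsto (fun L : ℕ => (2 * (L : ℝ) + 1) ^ e) atTop atTop :=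
  (tendsto_rpow_atTop he).comp <| tendsto_atTop_add_const_right _ 1
    (tendsto_natCast_atTop_atTop.const_mul_atTop two_pos)

theorem Real.mul_mul_rpow_rpow_neg {x y r : ℝ} (hx : 0 ≤ x) (hy : 0 ≤ y) (hr : 0 ≤ r) (α δ : ℝ) :
    (x * y * r ^ α) ^ (-δ) = x ^ (-δ) * (y ^ (-δ) * r ^ (-(α * δ))) := by
  rw [Real.mul_rpow (by positivity) (by positivity), Real.mul_rpow hx hy, ← Real.rpow_mul hr,
    mul_neg, mul_assoc]

theorem max_potential_eigenvalue_asymptotics_general {Ω : Type*} [MeasurableSpace Ω]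
    (P : Measure Ω) [IsProbabilityMeasure P]
    (d : ℕ) (hd : 1 ≤ d) (α δ b : ℝ) (hα : 0 < α) (hδ : 0 < δ)
    (h2 : α * δ < d)
    (X : (Fin d → ℤ) → Ω → ℝ) (hmeas : ∀ n, Measurable (X n))
    (hindep : iIndepFun X P)
    (hdist : ∀ n, Measure.map (X n) P =
      volume.withDensity
        (fun t => ENNReal.ofReal (if 1 < |t| then δ / 2 * |t| ^ (-(1 + δ)) else 0)))
    (hb : Tendsto
      (fun L : ℕ =>
        ((2 * (L : ℝ) + 1) ^ (((d : ℝ) - α * δ) / δ)) ^ (-δ) *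
          ∑ n ∈ cube d L, (1 + ‖n‖) ^ (-(α * δ)))
      atTop (nhds b))
    (hne : ∀ L : ℕ, (cube d L).Nonempty)
    (x : ℝ) :
    Tendsto
      (fun L : ℕ =>
        (P {ω | ((cube d L).sup' (hne L) fun n => X n ω / (1 + ‖n‖) ^ α) /
            (2 * (L : ℝ) + 1) ^ (((d : ℝ) - α * δ) / δ) ≤ x}).toReal)
      atTop (nhds (if 0 < x then Real.exp (-(b / (2 * x ^ δ))) else 0)) := by
  have hν : ∀ n, P.map (X n) = symmParetoMeasure δ := hdist
  have : IsProbabilityMeasure (symmParetoMeasure δ) :=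
    hν 0 ▸ Measure.isProbabilityMeasure_map (hmeas 0).aemeasurable
  set Γ : ℕ → ℝ := fun L => (2 * (L : ℝ) + 1) ^ (((d : ℝ) - α * δ) / δ)
  have hΓ_pos : ∀ L, 0 < Γ L := fun L => by positivity
  have hw : ∀ n : Fin d → ℤ, 1 ≤ (1 + ‖n‖) ^ α := fun n =>
    Real.one_le_rpow (le_add_of_nonneg_right (norm_nonneg n)) hα.le
  have hprod : ∀ L, (P {ω | ((cube d L).sup' (hne L) fun n => X n ω / (1 + ‖n‖) ^ α) / Γ L ≤ x}).toReal
      = ∏ n ∈ cube d L, (symmParetoMeasure δ).real (Iic (x * Γ L * (1 + ‖n‖) ^ α)) := by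
    intro L
    simp_rw [div_le_iff₀ (hΓ_pos L)]
    rw [hindep.measure_sup'_div_le_eq_prod hmeas hν (hne L) (fun n _ => by linarith [hw n]),
      ENNReal.toReal_prod]
    rfl
  refine Tendsto.congr (fun L => (hprod L).symm) ?_
  split_ifs with hx
  · have hΓ_top : Tendsto Γ atTop atTop :=
      tendsto_two_mul_add_one_rpow_atTop (div_pos (by linarith) hδ)
    refine symmParetoMeasure.tendsto_prod_measureReal_Iic hδ (hΓ_top.const_mul_atTop hx)
      (.of_forall fun L n _ => le_mul_of_one_le_right (by positivity) (hw n)) ?_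
    convert hb.const_mul (x ^ (-δ) / 2) using 1
    · funext L
      rw [Finset.mul_sum, Finset.mul_sum]
      refine Finset.sum_congr rfl fun n _ => ?_
      rw [Real.mul_mul_rpow_rpow_neg hx.le (hΓ_pos L).le (by positivity)]
      ring
    · rw [Real.rpow_neg hx.le]
      field_simp
  · exact tendsto_prod_nhds_zero_of_le_of_lt_one (by norm_num) (by norm_num)
      (fun L n _ => ⟨measureReal_nonneg, symmParetoMeasure.measureReal_Iic_le_half hδ
        (mul_nonpos_of_nonpos_of_nonneg (mul_nonpos_of_nonpos_of_nonneg (not_lt.1 hx)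
          (hΓ_pos L).le) (by linarith [hw n]) |>.trans zero_le_one)⟩)
      (tendsto_card_cube hd)

/-- Fréchet-type limit for the largest eigenvalue of the diagonal potential:
P(Ẽ_L^max/Γ_L ≤ x) → exp(-b/(2x^δ)) for x > 0, and → 0 for x ≤ 0. -/
theorem max_potential_eigenvalue_asymptotics {Ω : Type*} [MeasurableSpace Ω]
    (P : Measure Ω) [IsProbabilityMeasure P]
    (d : ℕ) (hd : 1 ≤ d) (α δ b : ℝ) (hα : 0 < α) (hδ : 0 < δ)
    (h1 : 0 < α * δ) (h2 : α * δ < d)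
    (X : (Fin d → ℤ) → Ω → ℝ) (hmeas : ∀ n, Measurable (X n))
    (hindep : iIndepFun X P)
    (hdist : ∀ n, Measure.map (X n) P =
      volume.withDensity
        (fun t => ENNReal.ofReal (if 1 < |t| then δ / 2 * |t| ^ (-(1 + δ)) else 0)))
    (hb : Tendsto
      (fun L : ℕ =>
        ((2 * (L : ℝ) + 1) ^ (((d : ℝ) - α * δ) / δ)) ^ (-δ) *
          ∑ n ∈ cube d L, (1 + ‖n‖) ^ (-(α * δ)))
      atTop (nhds b))
    (hne : ∀ L : ℕ, (cube d L).Nonempty)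
    (x : ℝ) :
    Tendsto
      (fun L : ℕ =>
        (P {ω | ((cube d L).sup' (hne L) fun n => X n ω / (1 + ‖n‖) ^ α) /
            (2 * (L : ℝ) + 1) ^ (((d : ℝ) - α * δ) / δ) ≤ x}).toReal)
      atTop (nhds (if 0 < x then Real.exp (-(b / (2 * x ^ δ))) else 0)) :=
  max_potential_eigenvalue_asymptotics_general P d hd α δ b hα hδ h2 X hmeas hindep hdist hb hne x
end
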